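/- Let A be an n×n complex positive definite matrix and let B1, B2 be n×n complex positive semidefinite matrices with B1 ≤ B2 in the Loewner order. Then A#B1 ≤ A#B2 in the Loewner order (monotonicity of the matrix geometric mean in its second argument). -/

import Mathlib

open Matrix
open scoped ComplexOrder
open scoped Classical

/-- The positive semidefinite square root of a positive semidefinite matrix
(junk value `0` if the matrix is not positive semidefinite). -/
noncomputable def psdSqrt {n : ℕ} (X : Matrix (Fin n) (Fin n) ℂ) : Matrix (Fin n) (Fin n) ℂ :=
  if h : X.PosSemidef then
    h.1.eigenvectorUnitary.1 * diagonal ((↑) ∘ (√·) ∘ h.1.eigenvalues) *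
      (star h.1.eigenvectorUnitary : Matrix (Fin n) (Fin n) ℂ)
  else 0

/-- The matrix geometric mean `A # B = A^{1/2} (A^{-1/2} B A^{-1/2})^{1/2} A^{1/2}`,
where `A^{-1/2} = (A^{1/2})⁻¹`. -/
noncomputable def geomMean {n : ℕ} (A B : Matrix (Fin n) (Fin n) ℂ) :
    Matrix (Fin n) (Fin n) ℂ :=
  psdSqrt A * psdSqrt ((psdSqrt A)⁻¹ * B * (psdSqrt A)⁻¹) * psdSqrt A

/-! `psdSqrt` is Mathlib's continuous-functional-calculus square root `CFC.sqrt` (both are `0` off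
the positive semidefinite cone), so `A # B = R (R⁻¹ B R⁻¹)^{1/2} R` with `R = A^{1/2}` self-adjoint.
Congruence by a self-adjoint matrix preserves the Loewner order, and `CFC.sqrt` is operator
monotone; composing these three monotone maps gives the claim. -/

open scoped MatrixOrder Matrix.Norms.L2Operator

theorem psdSqrt_eq_cfcSqrt {n : ℕ} (X : Matrix (Fin n) (Fin n) ℂ) : psdSqrt X = CFC.sqrt X := by
  by_cases hX : X.PosSemidef
  · rw [psdSqrt, dif_pos hX, CFC.sqrt_eq_real_sqrt X hX.nonneg, cfcₙ_eq_cfc, hX.1.cfc_eq]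
    rfl
  · rw [psdSqrt, dif_neg hX, CFC.sqrt_eq_cfc, cfc_apply_of_not_predicate]
    rwa [nonneg_iff_posSemidef]

theorem geomMean_eq_cfcSqrt {n : ℕ} (A B : Matrix (Fin n) (Fin n) ℂ) :
    geomMean A B =
      CFC.sqrt A * CFC.sqrt ((CFC.sqrt A)⁻¹ * B * (CFC.sqrt A)⁻¹) * CFC.sqrt A := by
  simp only [geomMean, psdSqrt_eq_cfcSqrt]

theorem geomMean_mono_right_general {n : ℕ}
    {A B1 B2 : Matrix (Fin n) (Fin n) ℂ}
    (h : (B2 - B1).PosSemidef) :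
    (geomMean A B2 - geomMean A B1).PosSemidef := by
  have hR : IsSelfAdjoint (CFC.sqrt A) := (CFC.sqrt_nonneg A).isSelfAdjoint
  have hRinv : IsSelfAdjoint (CFC.sqrt A)⁻¹ := hR.isHermitian.inv
  have hconj : (CFC.sqrt A)⁻¹ * B1 * (CFC.sqrt A)⁻¹ ≤ (CFC.sqrt A)⁻¹ * B2 * (CFC.sqrt A)⁻¹ :=
    hRinv.conjugate_le_conjugate h
  rw [← le_iff, geomMean_eq_cfcSqrt, geomMean_eq_cfcSqrt]
  exact hR.conjugate_le_conjugate (CFC.sqrt_le_sqrt _ _ hconj)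

/-- Monotonicity of the matrix geometric mean in its second argument:
if B1 ≤ B2 in the Loewner order then A#B1 ≤ A#B2. -/
theorem geomMean_mono_right {n : ℕ}
    {A B1 B2 : Matrix (Fin n) (Fin n) ℂ} (hA : A.PosDef)
    (hB1 : B1.PosSemidef) (hB2 : B2.PosSemidef)
    (h : (B2 - B1).PosSemidef) :
    (geomMean A B2 - geomMean A B1).PosSemidef :=
  geomMean_mono_right_general h
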